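/- arXiv:1302.6491 — 4 statements merged into one kernel-verified Lean document; each statement's English description precedes it below -/
import Mathlib

section
/- Let a, σ, b, β be real numbers with a > 0, σ > 0, β ≠ 0, and define Λ(u) = (a/(2σ))(b - sqrt(b² - 4σβu)) on the domain D = {u : b² - 4σβu ≥ 0}. Then for every x with βx > 0, the supremum over u ∈ D of (ux - Λ(u)) equals (bx - aβ)²/(4σ|βx|). -/
theorem stmt0 (a σ b β x : ℝ) (ha : 0 < a) (hσ : 0 < σ) (hβ : β ≠ 0)
    (hx : 0 < β * x) :
    sSup ((fun u => u * x - (a / (2 * σ)) * (b - Real.sqrt (b ^ 2 - 4 * σ * β * u))) ''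
        {u : ℝ | 0 ≤ b ^ 2 - 4 * σ * β * u}) =
      (b * x - a * β) ^ 2 / (4 * σ * |β * x|) := by
  have hx0 : x ≠ 0 := by rintro rfl; simp at hx
  have hσ0 : σ ≠ 0 := ne_of_gt hσ
  have habx : |β * x| = β * x := abs_of_pos hx
  rw [habx]
  have hbx : 0 < a * β / x := by
    have : β / x > 0 := by
      have : β / x = (β * x) / x ^ 2 := by field_simp
      rw [this]; positivity
    calc (0:ℝ) < a * (β / x) := by positivity
    _ = a * β / x := by ring
  apply IsGreatest.csSup_eq
  constructor
  · -- membership: value attained at u* = (b² - a²β²/x²)/(4σβ)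
    refine ⟨(b ^ 2 - a ^ 2 * β ^ 2 / x ^ 2) / (4 * σ * β), ?_, ?_⟩
    · show 0 ≤ b ^ 2 - 4 * σ * β * ((b ^ 2 - a ^ 2 * β ^ 2 / x ^ 2) / (4 * σ * β))
      have h1 : b ^ 2 - 4 * σ * β * ((b ^ 2 - a ^ 2 * β ^ 2 / x ^ 2) / (4 * σ * β))
          = (a * β / x) ^ 2 := by field_simp; ring
      rw [h1]; positivity
    · show _ * x - (a / (2 * σ)) * (b - Real.sqrt _) = _
      have h1 : b ^ 2 - 4 * σ * β * ((b ^ 2 - a ^ 2 * β ^ 2 / x ^ 2) / (4 * σ * β))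
          = (a * β / x) ^ 2 := by field_simp; ring
      rw [h1, Real.sqrt_sq (le_of_lt hbx)]
      field_simp
      ring
  · -- upper bound
    rintro v ⟨u, hu, rfl⟩
    simp only [Set.mem_setOf_eq] at hu
    set t := Real.sqrt (b ^ 2 - 4 * σ * β * u) with ht
    have ht0 : 0 ≤ t := Real.sqrt_nonneg _
    have ht2 : t ^ 2 = b ^ 2 - 4 * σ * β * u := Real.sq_sqrt hu
    show u * x - (a / (2 * σ)) * (b - t) ≤ (b * x - a * β) ^ 2 / (4 * σ * (β * x))
    rw [← sub_nonneg]
    have key : (b * x - a * β) ^ 2 / (4 * σ * (β * x)) - (u * x - (a / (2 * σ)) * (b - t))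
        = (x * t - a * β) ^ 2 / (4 * σ * (β * x)) := by
      have hu' : u = (b ^ 2 - t ^ 2) / (4 * σ * β) := by
        rw [ht2]; field_simp; ring
      rw [hu']
      field_simp
      ring
    rw [key]
    positivity
end

section
/- Let a > σ > 0, b ∈ ℝ, and let β, δ > 0. Define Λ(u) = ab/(2σ) − (1/(2σ))·sqrt(((a−σ)² − 4σδu)(b² − 4σβu)) − (1/2)·sqrt(b² − 4σβu) on D = (−∞, min((a−σ)²/(4σδ), b²/(4σβ))]. Then for every x ≤ 2·sqrt(βδ), the function u ↦ ux − Λ(u) is strictly decreasing on the interior of D; consequently the Fenchel–Legendre transform Λ*(x) = sup_{u∈D}(ux − Λ(u)) is not attained at any interior point for such x. -/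
set_option maxHeartbeats 1000000 in
theorem stmt10 (a σ b β δ : ℝ) (hσ : 0 < σ) (haσ : σ < a) (hβ : 0 < β) (hδ : 0 < δ) :
    ∀ x : ℝ, x ≤ 2 * Real.sqrt (β * δ) →
      StrictAntiOn
        (fun u => u * x -
          (a * b / (2 * σ) -
            (1 / (2 * σ)) * Real.sqrt (((a - σ) ^ 2 - 4 * σ * δ * u) * (b ^ 2 - 4 * σ * β * u)) -
            (1 / 2) * Real.sqrt (b ^ 2 - 4 * σ * β * u)))
        (Set.Iio (min ((a - σ) ^ 2 / (4 * σ * δ)) (b ^ 2 / (4 * σ * β)))) ∧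
      ∀ u₀ ∈ Set.Iio (min ((a - σ) ^ 2 / (4 * σ * δ)) (b ^ 2 / (4 * σ * β))),
        ¬ IsMaxOn
          (fun u => u * x -
            (a * b / (2 * σ) -
              (1 / (2 * σ)) * Real.sqrt (((a - σ) ^ 2 - 4 * σ * δ * u) * (b ^ 2 - 4 * σ * β * u)) -
              (1 / 2) * Real.sqrt (b ^ 2 - 4 * σ * β * u)))
          (Set.Iic (min ((a - σ) ^ 2 / (4 * σ * δ)) (b ^ 2 / (4 * σ * β)))) u₀ := by
  intro x hx
  set m := min ((a - σ) ^ 2 / (4 * σ * δ)) (b ^ 2 / (4 * σ * β)) with hmdef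
  have h4σδ : 0 < 4 * σ * δ := by positivity
  have h4σβ : 0 < 4 * σ * β := by positivity
  -- positivity of the radicands on Iio m
  have hP : ∀ w : ℝ, w < m → 0 < (a - σ) ^ 2 - 4 * σ * δ * w := by
    intro w hw
    have h1 : w < (a - σ) ^ 2 / (4 * σ * δ) := lt_of_lt_of_le hw (min_le_left _ _)
    have := (lt_div_iff₀ h4σδ).mp h1
    nlinarith
  have hQ : ∀ w : ℝ, w < m → 0 < b ^ 2 - 4 * σ * β * w := by
    intro w hw
    have h1 : w < b ^ 2 / (4 * σ * β) := lt_of_lt_of_le hw (min_le_right _ _)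
    have := (lt_div_iff₀ h4σβ).mp h1
    nlinarith
  have key : StrictAntiOn
      (fun u => u * x -
        (a * b / (2 * σ) -
          (1 / (2 * σ)) * Real.sqrt (((a - σ) ^ 2 - 4 * σ * δ * u) * (b ^ 2 - 4 * σ * β * u)) -
          (1 / 2) * Real.sqrt (b ^ 2 - 4 * σ * β * u)))
      (Set.Iio m) := by
    intro u hu v hv huv
    simp only [Set.mem_Iio] at hu hv
    dsimp only
    have hPu := hP u hu
    have hQu := hQ u hu
    have hPv := hP v hv
    have hQv := hQ v hv
    set s : ℝ := v - u with hs
    have hs0 : 0 < s := by simp [hs]; linarith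
    set A : ℝ := Real.sqrt ((a - σ) ^ 2 - 4 * σ * δ * v) with hA
    set B : ℝ := Real.sqrt (b ^ 2 - 4 * σ * β * v) with hB
    have hA0 : 0 ≤ A := Real.sqrt_nonneg _
    have hB0 : 0 ≤ B := Real.sqrt_nonneg _
    have hA2 : A ^ 2 = (a - σ) ^ 2 - 4 * σ * δ * v := Real.sq_sqrt hPv.le
    have hB2 : B ^ 2 = b ^ 2 - 4 * σ * β * v := Real.sq_sqrt hQv.le
    have hsqrtβ : (Real.sqrt β) ^ 2 = β := Real.sq_sqrt hβ.le
    have hsqrtδ : (Real.sqrt δ) ^ 2 = δ := Real.sq_sqrt hδ.le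
    have hc : Real.sqrt (β * δ) = Real.sqrt β * Real.sqrt δ := Real.sqrt_mul hβ.le _
    set c : ℝ := Real.sqrt (β * δ) with hcdef
    have hc0 : 0 ≤ c := Real.sqrt_nonneg _
    -- the sqrt of the product at v is A * B
    have hprodv : Real.sqrt (((a - σ) ^ 2 - 4 * σ * δ * v) * (b ^ 2 - 4 * σ * β * v)) = A * B := by
      rw [Real.sqrt_mul hPv.le]
    -- key inequality
    have hsum : 0 ≤ A * B + 4 * σ * c * s := by positivity
    have hsq : (A * B + 4 * σ * c * s) ^ 2
        ≤ ((a - σ) ^ 2 - 4 * σ * δ * u) * (b ^ 2 - 4 * σ * β * u) := by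
      have hPQu : ((a - σ) ^ 2 - 4 * σ * δ * u) * (b ^ 2 - 4 * σ * β * u)
          = (A ^ 2 + 4 * σ * δ * s) * (B ^ 2 + 4 * σ * β * s) := by
        rw [hA2, hB2]; ring
      rw [hPQu]
      have hc2 : c ^ 2 = β * δ := Real.sq_sqrt (by positivity)
      have e1 : Real.sqrt β ^ 2 * A ^ 2 = β * A ^ 2 := by rw [hsqrtβ]
      have e2 : Real.sqrt δ ^ 2 * B ^ 2 = δ * B ^ 2 := by rw [hsqrtδ]
      have h2 : 2 * c * (A * B) ≤ β * A ^ 2 + δ * B ^ 2 := by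
        rw [hc]
        nlinarith [sq_nonneg (Real.sqrt β * A - Real.sqrt δ * B), e1, e2]
      have e3 : 16 * σ ^ 2 * c ^ 2 * s ^ 2 = 16 * σ ^ 2 * (β * δ) * s ^ 2 := by rw [hc2]
      nlinarith [mul_le_mul_of_nonneg_left h2 (by positivity : (0:ℝ) ≤ 4 * σ * s), e3]
    have hkey : A * B + 4 * σ * c * s
        ≤ Real.sqrt (((a - σ) ^ 2 - 4 * σ * δ * u) * (b ^ 2 - 4 * σ * β * u)) := by
      have := Real.sqrt_le_sqrt hsq
      rwa [Real.sqrt_sq hsum] at this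
    -- second term strict
    have hBlt : B < Real.sqrt (b ^ 2 - 4 * σ * β * u) := by
      rw [hB]
      apply Real.sqrt_lt_sqrt hQv.le
      nlinarith
    -- assemble
    have hσ2 : (0:ℝ) < 1 / (2 * σ) := by positivity
    have hkey2 : (1 / (2 * σ)) * (A * B + 4 * σ * c * s)
        ≤ (1 / (2 * σ)) * Real.sqrt (((a - σ) ^ 2 - 4 * σ * δ * u) * (b ^ 2 - 4 * σ * β * u)) :=
      mul_le_mul_of_nonneg_left hkey hσ2.le
    have hrw : (1 / (2 * σ)) * (A * B + 4 * σ * c * s)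
        = (1 / (2 * σ)) * (A * B) + 2 * c * s := by
      field_simp
      ring
    rw [hrw] at hkey2
    have hxs : s * x ≤ s * (2 * c) := mul_le_mul_of_nonneg_left hx hs0.le
    rw [hprodv]
    nlinarith [hkey2, hxs, hBlt]
  refine ⟨key, ?_⟩
  intro u₀ hu₀ hmax
  have hu₀' : u₀ ∈ Set.Iio m := hu₀
  have h1 : u₀ - 1 ∈ Set.Iio m := by
    simp only [Set.mem_Iio] at hu₀' ⊢
    linarith
  have hlt := key h1 hu₀' (by linarith)
  have hle := hmax (Set.mem_Iic.mpr (le_of_lt (Set.mem_Iio.mp h1)))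
  exact absurd hle (not_le.mpr hlt)
end

section
/- Let a > σ > 0, b ∈ ℝ, β, δ ∈ ℝ with βδ < 0, and let D be the closed interval with endpoints (a−σ)²/(4σδ) and b²/(4σβ). Define Λ(u) = ab/(2σ) − (1/(2σ))·sqrt(((a−σ)² − 4σδu)(b² − 4σβu)) − (1/2)·sqrt(b² − 4σβu). Then for all u in the interior of D, the second derivative Λ''(u) = 2σ²β²/(b² − 4σβu)^{3/2} + 2σ(δb² − β(a−σ)²)²/(((a−σ)² − 4σδu)(b² − 4σβu))^{3/2} is strictly positive, hence Λ is strictly convex on D. -/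
theorem stmt11 (a σ b β δ : ℝ) (hσ : 0 < σ) (haσ : σ < a) (hβδ : β * δ < 0) :
    (∀ u ∈ Set.Ioo (min ((a - σ) ^ 2 / (4 * σ * δ)) (b ^ 2 / (4 * σ * β)))
        (max ((a - σ) ^ 2 / (4 * σ * δ)) (b ^ 2 / (4 * σ * β))),
      deriv (deriv (fun u =>
          a * b / (2 * σ) -
            (1 / (2 * σ)) * Real.sqrt (((a - σ) ^ 2 - 4 * σ * δ * u) * (b ^ 2 - 4 * σ * β * u)) -
            (1 / 2) * Real.sqrt (b ^ 2 - 4 * σ * β * u))) u =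
        2 * σ ^ 2 * β ^ 2 / (b ^ 2 - 4 * σ * β * u) ^ ((3 : ℝ) / 2) +
          2 * σ * (δ * b ^ 2 - β * (a - σ) ^ 2) ^ 2 /
            (((a - σ) ^ 2 - 4 * σ * δ * u) * (b ^ 2 - 4 * σ * β * u)) ^ ((3 : ℝ) / 2) ∧
      0 < 2 * σ ^ 2 * β ^ 2 / (b ^ 2 - 4 * σ * β * u) ^ ((3 : ℝ) / 2) +
          2 * σ * (δ * b ^ 2 - β * (a - σ) ^ 2) ^ 2 /
            (((a - σ) ^ 2 - 4 * σ * δ * u) * (b ^ 2 - 4 * σ * β * u)) ^ ((3 : ℝ) / 2)) ∧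
    StrictConvexOn ℝ
      (Set.Icc (min ((a - σ) ^ 2 / (4 * σ * δ)) (b ^ 2 / (4 * σ * β)))
        (max ((a - σ) ^ 2 / (4 * σ * δ)) (b ^ 2 / (4 * σ * β))))
      (fun u =>
        a * b / (2 * σ) -
          (1 / (2 * σ)) * Real.sqrt (((a - σ) ^ 2 - 4 * σ * δ * u) * (b ^ 2 - 4 * σ * β * u)) -
          (1 / 2) * Real.sqrt (b ^ 2 - 4 * σ * β * u)) := by
  have hA : 0 < (a - σ) ^ 2 := pow_pos (sub_pos.2 haσ) 2
  have hsgn : (0 < β ∧ δ < 0) ∨ (β < 0 ∧ 0 < δ) := by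
    rcases lt_trichotomy β 0 with h | h | h
    · right; exact ⟨h, by nlinarith⟩
    · exfalso; rw [h, zero_mul] at hβδ; exact lt_irrefl 0 hβδ
    · left; exact ⟨h, by nlinarith⟩
  set m := min ((a - σ) ^ 2 / (4 * σ * δ)) (b ^ 2 / (4 * σ * β)) with hm
  set M := max ((a - σ) ^ 2 / (4 * σ * δ)) (b ^ 2 / (4 * σ * β)) with hM
  have hPQpos : ∀ v ∈ Set.Ioo m M,
      0 < (a - σ) ^ 2 - 4 * σ * δ * v ∧ 0 < b ^ 2 - 4 * σ * β * v := by
    intro v hv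
    rcases hsgn with ⟨hβ, hδ⟩ | ⟨hβ, hδ⟩
    · -- β>0, δ<0 : m = A/(4σδ) < 0 ≤ b²/(4σβ) = M
      have h4δ : 4 * σ * δ < 0 := by nlinarith
      have h4β : 0 < 4 * σ * β := by nlinarith
      have hu1 : (a - σ) ^ 2 / (4 * σ * δ) < 0 := div_neg_of_pos_of_neg hA h4δ
      have hu2 : 0 ≤ b ^ 2 / (4 * σ * β) := div_nonneg (sq_nonneg b) h4β.le
      have hm' : m = (a - σ) ^ 2 / (4 * σ * δ) := min_eq_left (by linarith)
      have hM' : M = b ^ 2 / (4 * σ * β) := max_eq_right (by linarith)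
      have h1 : (a - σ) ^ 2 / (4 * σ * δ) < v := hm' ▸ hv.1
      have h2 : v < b ^ 2 / (4 * σ * β) := hM' ▸ hv.2
      have h1' : v * (4 * σ * δ) < (a - σ) ^ 2 := (div_lt_iff_of_neg h4δ).mp h1
      have h2' : v * (4 * σ * β) < b ^ 2 := (lt_div_iff₀ h4β).mp h2
      constructor <;> nlinarith
    · -- β<0, δ>0 : M = A/(4σδ) > 0 ≥ b²/(4σβ) = m
      have h4δ : 0 < 4 * σ * δ := by nlinarith
      have h4β : 4 * σ * β < 0 := by nlinarith
      have hu1 : 0 < (a - σ) ^ 2 / (4 * σ * δ) := div_pos hA h4δ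
      have hu2 : b ^ 2 / (4 * σ * β) ≤ 0 := div_nonpos_of_nonneg_of_nonpos (sq_nonneg b) h4β.le
      have hm' : m = b ^ 2 / (4 * σ * β) := min_eq_right (by linarith)
      have hM' : M = (a - σ) ^ 2 / (4 * σ * δ) := max_eq_left (by linarith)
      have h1 : b ^ 2 / (4 * σ * β) < v := hm' ▸ hv.1
      have h2 : v < (a - σ) ^ 2 / (4 * σ * δ) := hM' ▸ hv.2
      have h1' : v * (4 * σ * β) < b ^ 2 := (div_lt_iff_of_neg h4β).mp h1
      have h2' : v * (4 * σ * δ) < (a - σ) ^ 2 := (lt_div_iff₀ h4δ).mp h2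
      constructor <;> nlinarith
  -- first derivative
  have hlinP : ∀ v : ℝ, HasDerivAt (fun w : ℝ => (a - σ) ^ 2 - 4 * σ * δ * w) (-(4 * σ * δ)) v := by
    intro v
    simpa using ((hasDerivAt_id v).const_mul (4 * σ * δ)).const_sub ((a - σ) ^ 2)
  have hlinQ : ∀ v : ℝ, HasDerivAt (fun w : ℝ => b ^ 2 - 4 * σ * β * w) (-(4 * σ * β)) v := by
    intro v
    simpa using ((hasDerivAt_id v).const_mul (4 * σ * β)).const_sub (b ^ 2)
  have key : ∀ v ∈ Set.Ioo m M,
      HasDerivAt (fun u =>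
          a * b / (2 * σ) -
            (1 / (2 * σ)) * Real.sqrt (((a - σ) ^ 2 - 4 * σ * δ * u) * (b ^ 2 - 4 * σ * β * u)) -
            (1 / 2) * Real.sqrt (b ^ 2 - 4 * σ * β * u))
        (0 - 1 / (2 * σ) *
            ((-(4 * σ * δ) * (b ^ 2 - 4 * σ * β * v) + ((a - σ) ^ 2 - 4 * σ * δ * v) * -(4 * σ * β)) /
              (2 * Real.sqrt (((a - σ) ^ 2 - 4 * σ * δ * v) * (b ^ 2 - 4 * σ * β * v)))) -
          1 / 2 * (-(4 * σ * β) / (2 * Real.sqrt (b ^ 2 - 4 * σ * β * v)))) v := by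
    intro v hv
    obtain ⟨hP, hQ⟩ := hPQpos v hv
    have hs1 := ((hlinP v).mul (hlinQ v)).sqrt (ne_of_gt (mul_pos hP hQ))
    have hs2 := (hlinQ v).sqrt (ne_of_gt hQ)
    exact ((hasDerivAt_const v (a * b / (2 * σ))).sub (hs1.const_mul (1 / (2 * σ)))).sub
      (hs2.const_mul (1 / 2))
  have main : ∀ u ∈ Set.Ioo m M,
      deriv (deriv (fun u =>
          a * b / (2 * σ) -
            (1 / (2 * σ)) * Real.sqrt (((a - σ) ^ 2 - 4 * σ * δ * u) * (b ^ 2 - 4 * σ * β * u)) -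
            (1 / 2) * Real.sqrt (b ^ 2 - 4 * σ * β * u))) u =
        2 * σ ^ 2 * β ^ 2 / (b ^ 2 - 4 * σ * β * u) ^ ((3 : ℝ) / 2) +
          2 * σ * (δ * b ^ 2 - β * (a - σ) ^ 2) ^ 2 /
            (((a - σ) ^ 2 - 4 * σ * δ * u) * (b ^ 2 - 4 * σ * β * u)) ^ ((3 : ℝ) / 2) := by
    intro u hu
    obtain ⟨hP, hQ⟩ := hPQpos u hu
    have hPQ : 0 < ((a - σ) ^ 2 - 4 * σ * δ * u) * (b ^ 2 - 4 * σ * β * u) := mul_pos hP hQ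
    have hEv : deriv (fun u =>
          a * b / (2 * σ) -
            (1 / (2 * σ)) * Real.sqrt (((a - σ) ^ 2 - 4 * σ * δ * u) * (b ^ 2 - 4 * σ * β * u)) -
            (1 / 2) * Real.sqrt (b ^ 2 - 4 * σ * β * u)) =ᶠ[nhds u]
        (fun v => 0 - 1 / (2 * σ) *
            ((-(4 * σ * δ) * (b ^ 2 - 4 * σ * β * v) + ((a - σ) ^ 2 - 4 * σ * δ * v) * -(4 * σ * β)) /
              (2 * Real.sqrt (((a - σ) ^ 2 - 4 * σ * δ * v) * (b ^ 2 - 4 * σ * β * v)))) -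
          1 / 2 * (-(4 * σ * β) / (2 * Real.sqrt (b ^ 2 - 4 * σ * β * v)))) :=
      Filter.eventuallyEq_of_mem (isOpen_Ioo.mem_nhds hu) (fun v hv => (key v hv).deriv)
    rw [hEv.deriv_eq]
    -- derivative of the first-derivative function at u
    have hnum1 := ((hlinQ u).const_mul (-(4 * σ * δ))).add ((hlinP u).mul_const (-(4 * σ * β)))
    have hden1 := (((hlinP u).mul (hlinQ u)).sqrt (ne_of_gt hPQ)).const_mul 2
    have hden1ne : (2 : ℝ) * Real.sqrt (((a - σ) ^ 2 - 4 * σ * δ * u) * (b ^ 2 - 4 * σ * β * u)) ≠ 0 :=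
      mul_ne_zero two_ne_zero (Real.sqrt_ne_zero'.mpr hPQ)
    have hden2 := ((hlinQ u).sqrt (ne_of_gt hQ)).const_mul 2
    have hden2ne : (2 : ℝ) * Real.sqrt (b ^ 2 - 4 * σ * β * u) ≠ 0 :=
      mul_ne_zero two_ne_zero (Real.sqrt_ne_zero'.mpr hQ)
    have hG := ((hasDerivAt_const u (0 : ℝ)).sub
        ((hnum1.div hden1 hden1ne).const_mul (1 / (2 * σ)))).sub
      (((hasDerivAt_const u (-(4 * σ * β))).div hden2 hden2ne).const_mul (1 / 2))
    erw [hG.deriv]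
    simp only [Pi.add_apply, Pi.mul_apply]
    -- now pure algebra
    have hsP : 0 < Real.sqrt ((a - σ) ^ 2 - 4 * σ * δ * u) := Real.sqrt_pos.2 hP
    have hsQ : 0 < Real.sqrt (b ^ 2 - 4 * σ * β * u) := Real.sqrt_pos.2 hQ
    have hmul : Real.sqrt (((a - σ) ^ 2 - 4 * σ * δ * u) * (b ^ 2 - 4 * σ * β * u)) =
        Real.sqrt ((a - σ) ^ 2 - 4 * σ * δ * u) * Real.sqrt (b ^ 2 - 4 * σ * β * u) :=
      Real.sqrt_mul hP.le _
    have h32Q : (b ^ 2 - 4 * σ * β * u) ^ ((3 : ℝ) / 2) =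
        Real.sqrt (b ^ 2 - 4 * σ * β * u) ^ 3 := by
      rw [Real.sqrt_eq_rpow, ← Real.rpow_natCast ((b ^ 2 - 4 * σ * β * u) ^ ((1 : ℝ) / 2)) 3,
        ← Real.rpow_mul hQ.le]
      norm_num
    have h32PQ : (((a - σ) ^ 2 - 4 * σ * δ * u) * (b ^ 2 - 4 * σ * β * u)) ^ ((3 : ℝ) / 2) =
        Real.sqrt (((a - σ) ^ 2 - 4 * σ * δ * u) * (b ^ 2 - 4 * σ * β * u)) ^ 3 := by
      rw [Real.sqrt_eq_rpow, ← Real.rpow_natCast ((((a - σ) ^ 2 - 4 * σ * δ * u) *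
        (b ^ 2 - 4 * σ * β * u)) ^ ((1 : ℝ) / 2)) 3, ← Real.rpow_mul hPQ.le]
      norm_num
    rw [h32Q, h32PQ, hmul]
    have e1 : Real.sqrt ((a - σ) ^ 2 - 4 * σ * δ * u) ^ 2 = (a - σ) ^ 2 - 4 * σ * δ * u :=
      Real.sq_sqrt hP.le
    have e2 : Real.sqrt (b ^ 2 - 4 * σ * β * u) ^ 2 = b ^ 2 - 4 * σ * β * u :=
      Real.sq_sqrt hQ.le
    set x := Real.sqrt ((a - σ) ^ 2 - 4 * σ * δ * u) with hx
    set y := Real.sqrt (b ^ 2 - 4 * σ * β * u) with hy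
    rw [show (a - σ) ^ 2 = x ^ 2 + 4 * σ * δ * u by rw [e1]; ring,
      show b ^ 2 = y ^ 2 + 4 * σ * β * u by rw [e2]; ring]
    have hxne : x ≠ 0 := ne_of_gt hsP
    have hyne : y ≠ 0 := ne_of_gt hsQ
    field_simp
    ring
  have hβ2 : 0 < β ^ 2 := by rcases hsgn with ⟨h, _⟩ | ⟨h, _⟩ <;> nlinarith
  have hD2 : 0 < (δ * b ^ 2 - β * (a - σ) ^ 2) ^ 2 := by
    rcases hsgn with ⟨hβ, hδ⟩ | ⟨hβ, hδ⟩
    · have h1 : 0 < β * (a - σ) ^ 2 := mul_pos hβ hA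
      have h2 : δ * b ^ 2 ≤ 0 := mul_nonpos_of_nonpos_of_nonneg hδ.le (sq_nonneg b)
      nlinarith
    · have h1 : β * (a - σ) ^ 2 < 0 := mul_neg_of_neg_of_pos hβ hA
      have h2 : 0 ≤ δ * b ^ 2 := mul_nonneg hδ.le (sq_nonneg b)
      nlinarith
  have mainpos : ∀ u ∈ Set.Ioo m M,
      0 < 2 * σ ^ 2 * β ^ 2 / (b ^ 2 - 4 * σ * β * u) ^ ((3 : ℝ) / 2) +
          2 * σ * (δ * b ^ 2 - β * (a - σ) ^ 2) ^ 2 /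
            (((a - σ) ^ 2 - 4 * σ * δ * u) * (b ^ 2 - 4 * σ * β * u)) ^ ((3 : ℝ) / 2) := by
    intro u hu
    obtain ⟨hP, hQ⟩ := hPQpos u hu
    have hPQ : 0 < ((a - σ) ^ 2 - 4 * σ * δ * u) * (b ^ 2 - 4 * σ * β * u) := mul_pos hP hQ
    have d1 : (0:ℝ) < (b ^ 2 - 4 * σ * β * u) ^ ((3 : ℝ) / 2) := Real.rpow_pos_of_pos hQ _
    have d2 : (0:ℝ) < (((a - σ) ^ 2 - 4 * σ * δ * u) * (b ^ 2 - 4 * σ * β * u)) ^ ((3 : ℝ) / 2) :=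
      Real.rpow_pos_of_pos hPQ _
    have n1 : (0:ℝ) < 2 * σ ^ 2 * β ^ 2 := by positivity
    have n2 : (0:ℝ) < 2 * σ * (δ * b ^ 2 - β * (a - σ) ^ 2) ^ 2 := by positivity
    exact add_pos (div_pos n1 d1) (div_pos n2 d2)
  refine ⟨fun u hu => ⟨main u hu, mainpos u hu⟩, ?_⟩
  apply strictConvexOn_of_deriv2_pos (convex_Icc m M)
  · apply Continuous.continuousOn
    fun_prop
  · intro x hx
    rw [interior_Icc] at hx
    simp only [Function.iterate_succ, Function.iterate_zero, Function.comp_apply, id_eq]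
    rw [main x hx]
    exact mainpos x hx
end

section
/- Let a > σ > 0 and β < 0, δ > 0. Define Λ(u) = −sqrt(−σβu) − (1/σ)·sqrt(−σβu)·sqrt((a−σ)² − 4σδu) for u ∈ [0, (a−σ)²/(4σδ)]. Then Λ is convex on its domain, Λ'(u) = σβ/(2·sqrt(−σβu)) + β·sqrt((a−σ)² − 4σδu)/(2·sqrt(−σβu)) + 2δ·sqrt(−σβu)/sqrt((a−σ)² − 4σδu) for u in the open interval (0, (a−σ)²/(4σδ)), and the range of Λ' on this interval is ℝ. -/
open Set Filter Real

lemma aux_deriv (a σ β δ : ℝ) (hσ : 0 < σ) (haσ : σ < a) (hβ : β < 0) (hδ : 0 < δ)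
    {u : ℝ} (hu : u ∈ Set.Ioo (0 : ℝ) ((a - σ) ^ 2 / (4 * σ * δ))) :
    HasDerivAt
      (fun u => -Real.sqrt (-(σ * β * u)) -
        (1 / σ) * Real.sqrt (-(σ * β * u)) * Real.sqrt ((a - σ) ^ 2 - 4 * σ * δ * u))
      (σ * β / (2 * Real.sqrt (-(σ * β * u))) +
        β * Real.sqrt ((a - σ) ^ 2 - 4 * σ * δ * u) / (2 * Real.sqrt (-(σ * β * u))) +
        2 * δ * Real.sqrt (-(σ * β * u)) / Real.sqrt ((a - σ) ^ 2 - 4 * σ * δ * u)) u := by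
  obtain ⟨hu0, huT⟩ := hu
  have hu1 : 0 < -(σ * β * u) := by have := mul_pos (mul_pos hσ hu0) (neg_pos.2 hβ); nlinarith
  have hu2 : 0 < (a - σ) ^ 2 - 4 * σ * δ * u := by
    have := (lt_div_iff₀ (by positivity : (0:ℝ) < 4 * σ * δ)).mp huT
    nlinarith
  have hs : 0 < Real.sqrt (-(σ * β * u)) := Real.sqrt_pos.2 hu1
  have ht : 0 < Real.sqrt ((a - σ) ^ 2 - 4 * σ * δ * u) := Real.sqrt_pos.2 hu2
  have h1 : HasDerivAt (fun u : ℝ => -(σ * β * u)) (-(σ * β)) u := by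
    have := ((hasDerivAt_id u).const_mul (σ * β)).neg; simp only [mul_one] at this; exact this
  have h2 : HasDerivAt (fun u : ℝ => (a - σ) ^ 2 - 4 * σ * δ * u) (-(4 * σ * δ)) u := by
    simpa using ((hasDerivAt_id u).const_mul (4 * σ * δ)).const_sub ((a - σ) ^ 2)
  have hS : HasDerivAt (fun u : ℝ => Real.sqrt (-(σ * β * u)))
      (1 / (2 * Real.sqrt (-(σ * β * u))) * -(σ * β)) u :=
    (Real.hasDerivAt_sqrt (ne_of_gt hu1)).comp u h1
  have hT : HasDerivAt (fun u : ℝ => Real.sqrt ((a - σ) ^ 2 - 4 * σ * δ * u))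
      (1 / (2 * Real.sqrt ((a - σ) ^ 2 - 4 * σ * δ * u)) * -(4 * σ * δ)) u :=
    (Real.hasDerivAt_sqrt (ne_of_gt hu2)).comp u h2
  have H := (hS.neg).sub ((hS.const_mul (1 / σ)).mul hT)
  exact H.congr_deriv (by
  generalize Real.sqrt (-(σ * β * u)) = S at hs ⊢
  generalize Real.sqrt ((a - σ) ^ 2 - 4 * σ * δ * u) = T at ht ⊢
  field_simp
  ring)

lemma aux_mono (a σ β δ : ℝ) (hσ : 0 < σ) (haσ : σ < a) (hβ : β < 0) (hδ : 0 < δ) :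
    MonotoneOn (fun u => σ * β / (2 * Real.sqrt (-(σ * β * u))) +
        β * Real.sqrt ((a - σ) ^ 2 - 4 * σ * δ * u) / (2 * Real.sqrt (-(σ * β * u))) +
        2 * δ * Real.sqrt (-(σ * β * u)) / Real.sqrt ((a - σ) ^ 2 - 4 * σ * δ * u))
      (Set.Ioo (0 : ℝ) ((a - σ) ^ 2 / (4 * σ * δ))) := by
  intro x hx y hy hxy
  obtain ⟨hx0, hxT⟩ := hx
  obtain ⟨hy0, hyT⟩ := hy
  have hx1 : 0 < -(σ * β * x) := by have := mul_pos (mul_pos hσ hx0) (neg_pos.2 hβ); nlinarith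
  have hy1 : 0 < -(σ * β * y) := by have := mul_pos (mul_pos hσ hy0) (neg_pos.2 hβ); nlinarith
  have hx2 : 0 < (a - σ) ^ 2 - 4 * σ * δ * x := by
    have := (lt_div_iff₀ (by positivity : (0:ℝ) < 4 * σ * δ)).mp hxT
    nlinarith
  have hy2 : 0 < (a - σ) ^ 2 - 4 * σ * δ * y := by
    have := (lt_div_iff₀ (by positivity : (0:ℝ) < 4 * σ * δ)).mp hyT
    nlinarith
  set sx := Real.sqrt (-(σ * β * x)) with hsx
  set sy := Real.sqrt (-(σ * β * y)) with hsy
  set tx := Real.sqrt ((a - σ) ^ 2 - 4 * σ * δ * x) with htx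
  set ty := Real.sqrt ((a - σ) ^ 2 - 4 * σ * δ * y) with hty
  have hsxp : 0 < sx := Real.sqrt_pos.2 hx1
  have hsyp : 0 < sy := Real.sqrt_pos.2 hy1
  have htxp : 0 < tx := Real.sqrt_pos.2 hx2
  have htyp : 0 < ty := Real.sqrt_pos.2 hy2
  have hmul : 4 * σ * δ * x ≤ 4 * σ * δ * y := mul_le_mul_of_nonneg_left hxy (by positivity)
  have hmul2 : σ * β * y ≤ σ * β * x := mul_le_mul_of_nonpos_left hxy (le_of_lt (mul_neg_of_pos_of_neg hσ hβ))
  have hss : sx ≤ sy := Real.sqrt_le_sqrt (by linarith)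
  have htt : ty ≤ tx := Real.sqrt_le_sqrt (by linarith)
  simp only
  have h1 : σ * β / (2 * sx) ≤ σ * β / (2 * sy) := by
    rw [div_eq_mul_inv, div_eq_mul_inv]
    exact mul_le_mul_of_nonpos_left
      (by exact inv_anti₀ (by linarith) (by linarith)) (le_of_lt (mul_neg_of_pos_of_neg hσ hβ))
  have h2 : β * tx / (2 * sx) ≤ β * ty / (2 * sy) := by
    rw [mul_div_assoc, mul_div_assoc]
    exact mul_le_mul_of_nonpos_left
      (div_le_div₀ htxp.le htt (by linarith) (by linarith)) hβ.le
  have h3 : 2 * δ * sx / tx ≤ 2 * δ * sy / ty :=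
    div_le_div₀ (by positivity) (by nlinarith) htyp htt
  exact add_le_add (add_le_add h1 h2) h3

lemma aux_tendsto0 (a σ β δ : ℝ) (hσ : 0 < σ) (haσ : σ < a) (hβ : β < 0) (hδ : 0 < δ) :
    Tendsto (fun u => σ * β / (2 * Real.sqrt (-(σ * β * u))) +
        β * Real.sqrt ((a - σ) ^ 2 - 4 * σ * δ * u) / (2 * Real.sqrt (-(σ * β * u))) +
        2 * δ * Real.sqrt (-(σ * β * u)) / Real.sqrt ((a - σ) ^ 2 - 4 * σ * δ * u))
      (nhdsWithin 0 (Set.Ioi 0)) atBot := by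
  have hscont : Continuous (fun u : ℝ => Real.sqrt (-(σ * β * u))) :=
    Real.continuous_sqrt.comp (by continuity)
  have htcont : Continuous (fun u : ℝ => Real.sqrt ((a - σ) ^ 2 - 4 * σ * δ * u)) :=
    Real.continuous_sqrt.comp (by continuity)
  have hs0 : Tendsto (fun u : ℝ => Real.sqrt (-(σ * β * u))) (nhdsWithin 0 (Set.Ioi 0)) (nhds 0) := by
    have := (hscont.tendsto 0).mono_left (nhdsWithin_le_nhds (s := Set.Ioi (0:ℝ)))
    simpa using this
  have hinv : Tendsto (fun u : ℝ => (2 * Real.sqrt (-(σ * β * u)))⁻¹)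
      (nhdsWithin 0 (Set.Ioi 0)) atTop := by
    apply Filter.Tendsto.inv_tendsto_nhdsGT_zero
    rw [tendsto_nhdsWithin_iff]
    constructor
    · simpa using hs0.const_mul 2
    · filter_upwards [self_mem_nhdsWithin] with u hu
      have hu1 : 0 < -(σ * β * u) := by
        have := mul_pos (mul_pos hσ hu) (neg_pos.2 hβ); nlinarith
      have := Real.sqrt_pos.2 hu1
      exact mul_pos two_pos this
  have ht : Tendsto (fun u : ℝ => Real.sqrt ((a - σ) ^ 2 - 4 * σ * δ * u))
      (nhdsWithin 0 (Set.Ioi 0)) (nhds (Real.sqrt ((a - σ) ^ 2))) := by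
    have := (htcont.tendsto 0).mono_left (nhdsWithin_le_nhds (s := Set.Ioi 0))
    simpa using this
  have hneg : σ * β + β * Real.sqrt ((a - σ) ^ 2) < 0 := by
    have h1 : σ * β < 0 := mul_neg_of_pos_of_neg hσ hβ
    have h2 : β * Real.sqrt ((a - σ) ^ 2) ≤ 0 :=
      mul_nonpos_of_nonpos_of_nonneg hβ.le (Real.sqrt_nonneg _)
    linarith
  have hA : Tendsto (fun u : ℝ => (σ * β + β * Real.sqrt ((a - σ) ^ 2 - 4 * σ * δ * u)) *
      (2 * Real.sqrt (-(σ * β * u)))⁻¹) (nhdsWithin 0 (Set.Ioi 0)) atBot :=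
    Filter.Tendsto.neg_mul_atTop hneg (tendsto_const_nhds.add (ht.const_mul β)) hinv
  have hB : Tendsto (fun u : ℝ => 2 * δ * Real.sqrt (-(σ * β * u)) /
      Real.sqrt ((a - σ) ^ 2 - 4 * σ * δ * u)) (nhdsWithin 0 (Set.Ioi 0))
      (nhds (2 * δ * 0 / Real.sqrt ((a - σ) ^ 2))) := by
    exact Filter.Tendsto.div ((hs0.const_mul (2 * δ))) ht
      (Real.sqrt_ne_zero'.mpr (by nlinarith))
  have := hA.atBot_add hB
  refine this.congr fun u => by ring

lemma aux_tendstoT (a σ β δ : ℝ) (hσ : 0 < σ) (haσ : σ < a) (hβ : β < 0) (hδ : 0 < δ) :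
    Tendsto (fun u => σ * β / (2 * Real.sqrt (-(σ * β * u))) +
        β * Real.sqrt ((a - σ) ^ 2 - 4 * σ * δ * u) / (2 * Real.sqrt (-(σ * β * u))) +
        2 * δ * Real.sqrt (-(σ * β * u)) / Real.sqrt ((a - σ) ^ 2 - 4 * σ * δ * u))
      (nhdsWithin ((a - σ) ^ 2 / (4 * σ * δ)) (Set.Iio ((a - σ) ^ 2 / (4 * σ * δ)))) atTop := by
  set T : ℝ := (a - σ) ^ 2 / (4 * σ * δ) with hT
  have hT0 : 0 < T := div_pos (by nlinarith) (by positivity)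
  have hscont : Continuous (fun u : ℝ => Real.sqrt (-(σ * β * u))) :=
    Real.continuous_sqrt.comp (by continuity)
  have htcont : Continuous (fun u : ℝ => Real.sqrt ((a - σ) ^ 2 - 4 * σ * δ * u)) :=
    Real.continuous_sqrt.comp (by continuity)
  have hsT : 0 < Real.sqrt (-(σ * β * T)) := by
    apply Real.sqrt_pos.2
    have := mul_pos (mul_pos hσ hT0) (neg_pos.2 hβ); nlinarith
  have hs : Tendsto (fun u : ℝ => Real.sqrt (-(σ * β * u)))
      (nhdsWithin T (Set.Iio T)) (nhds (Real.sqrt (-(σ * β * T)))) :=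
    (hscont.tendsto T).mono_left (nhdsWithin_le_nhds (s := Set.Iio T))
  have hTzero : (a - σ) ^ 2 - 4 * σ * δ * T = 0 := by
    rw [hT]; field_simp; ring
  have ht0 : Tendsto (fun u : ℝ => Real.sqrt ((a - σ) ^ 2 - 4 * σ * δ * u))
      (nhdsWithin T (Set.Iio T)) (nhds 0) := by
    have := (htcont.tendsto T).mono_left (nhdsWithin_le_nhds (s := Set.Iio T))
    rwa [hTzero, Real.sqrt_zero] at this
  have htin : Tendsto (fun u : ℝ => Real.sqrt ((a - σ) ^ 2 - 4 * σ * δ * u))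
      (nhdsWithin T (Set.Iio T)) (nhdsWithin 0 (Set.Ioi 0)) := by
    rw [tendsto_nhdsWithin_iff]
    refine ⟨ht0, ?_⟩
    filter_upwards [self_mem_nhdsWithin] with u hu
    have : 4 * σ * δ * u < (a - σ) ^ 2 := by
      have := (lt_div_iff₀ (by positivity : (0:ℝ) < 4 * σ * δ)).mp hu
      nlinarith
    exact Real.sqrt_pos.2 (by linarith)
  have htinv : Tendsto (fun u : ℝ => (Real.sqrt ((a - σ) ^ 2 - 4 * σ * δ * u))⁻¹)
      (nhdsWithin T (Set.Iio T)) atTop := htin.inv_tendsto_nhdsGT_zero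
  have h3 : Tendsto (fun u : ℝ => (2 * δ * Real.sqrt (-(σ * β * u))) *
      (Real.sqrt ((a - σ) ^ 2 - 4 * σ * δ * u))⁻¹) (nhdsWithin T (Set.Iio T)) atTop :=
    Filter.Tendsto.pos_mul_atTop (by positivity) (hs.const_mul (2 * δ)) htinv
  have hne : 2 * Real.sqrt (-(σ * β * T)) ≠ 0 := by positivity
  have h1 : Tendsto (fun u : ℝ => σ * β / (2 * Real.sqrt (-(σ * β * u))))
      (nhdsWithin T (Set.Iio T)) (nhds (σ * β / (2 * Real.sqrt (-(σ * β * T))))) :=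
    tendsto_const_nhds.div (hs.const_mul 2) hne
  have h2 : Tendsto (fun u : ℝ => β * Real.sqrt ((a - σ) ^ 2 - 4 * σ * δ * u) /
      (2 * Real.sqrt (-(σ * β * u)))) (nhdsWithin T (Set.Iio T))
      (nhds (β * 0 / (2 * Real.sqrt (-(σ * β * T))))) :=
    (ht0.const_mul β).div (hs.const_mul 2) hne
  have := ((h1.add h2).add_atTop h3)
  refine this.congr fun u => by ring

lemma aux_cont (a σ β δ : ℝ) (hσ : 0 < σ) (haσ : σ < a) (hβ : β < 0) (hδ : 0 < δ) :
    ContinuousOn (fun u => σ * β / (2 * Real.sqrt (-(σ * β * u))) +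
        β * Real.sqrt ((a - σ) ^ 2 - 4 * σ * δ * u) / (2 * Real.sqrt (-(σ * β * u))) +
        2 * δ * Real.sqrt (-(σ * β * u)) / Real.sqrt ((a - σ) ^ 2 - 4 * σ * δ * u))
      (Set.Ioo (0 : ℝ) ((a - σ) ^ 2 / (4 * σ * δ))) := by
  have hscont : Continuous (fun u : ℝ => Real.sqrt (-(σ * β * u))) :=
    Real.continuous_sqrt.comp (by continuity)
  have htcont : Continuous (fun u : ℝ => Real.sqrt ((a - σ) ^ 2 - 4 * σ * δ * u)) :=
    Real.continuous_sqrt.comp (by continuity)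
  have hsne : ∀ u ∈ Set.Ioo (0 : ℝ) ((a - σ) ^ 2 / (4 * σ * δ)),
      2 * Real.sqrt (-(σ * β * u)) ≠ 0 := by
    intro u hu
    have hu1 : 0 < -(σ * β * u) := by
      have := mul_pos (mul_pos hσ hu.1) (neg_pos.2 hβ); nlinarith
    have := Real.sqrt_pos.2 hu1
    positivity
  have htne : ∀ u ∈ Set.Ioo (0 : ℝ) ((a - σ) ^ 2 / (4 * σ * δ)),
      Real.sqrt ((a - σ) ^ 2 - 4 * σ * δ * u) ≠ 0 := by
    intro u hu
    have : 4 * σ * δ * u < (a - σ) ^ 2 := by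
      have := (lt_div_iff₀ (by positivity : (0:ℝ) < 4 * σ * δ)).mp hu.2
      nlinarith
    exact ne_of_gt (Real.sqrt_pos.2 (by linarith))
  refine ContinuousOn.add (ContinuousOn.add ?_ ?_) ?_
  · exact continuousOn_const.div (continuous_const.mul hscont).continuousOn hsne
  · exact (continuous_const.mul htcont).continuousOn.div
      (continuous_const.mul hscont).continuousOn hsne
  · exact (continuous_const.mul hscont).continuousOn.div htcont.continuousOn htne


theorem stmt12 (a σ β δ : ℝ) (hσ : 0 < σ) (haσ : σ < a) (hβ : β < 0) (hδ : 0 < δ) :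
    ConvexOn ℝ (Set.Icc (0 : ℝ) ((a - σ) ^ 2 / (4 * σ * δ)))
      (fun u => -Real.sqrt (-(σ * β * u)) -
        (1 / σ) * Real.sqrt (-(σ * β * u)) * Real.sqrt ((a - σ) ^ 2 - 4 * σ * δ * u)) ∧
    (∀ u ∈ Set.Ioo (0 : ℝ) ((a - σ) ^ 2 / (4 * σ * δ)),
      HasDerivAt
        (fun u => -Real.sqrt (-(σ * β * u)) -
          (1 / σ) * Real.sqrt (-(σ * β * u)) * Real.sqrt ((a - σ) ^ 2 - 4 * σ * δ * u))
        (σ * β / (2 * Real.sqrt (-(σ * β * u))) +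
          β * Real.sqrt ((a - σ) ^ 2 - 4 * σ * δ * u) / (2 * Real.sqrt (-(σ * β * u))) +
          2 * δ * Real.sqrt (-(σ * β * u)) / Real.sqrt ((a - σ) ^ 2 - 4 * σ * δ * u)) u) ∧
    (fun u => σ * β / (2 * Real.sqrt (-(σ * β * u))) +
        β * Real.sqrt ((a - σ) ^ 2 - 4 * σ * δ * u) / (2 * Real.sqrt (-(σ * β * u))) +
        2 * δ * Real.sqrt (-(σ * β * u)) / Real.sqrt ((a - σ) ^ 2 - 4 * σ * δ * u)) ''
      Set.Ioo (0 : ℝ) ((a - σ) ^ 2 / (4 * σ * δ)) = Set.univ := by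
  have hT0 : 0 < (a - σ) ^ 2 / (4 * σ * δ) := div_pos (by nlinarith) (by positivity)
  refine ⟨?_, fun u hu => aux_deriv a σ β δ hσ haσ hβ hδ hu, ?_⟩
  · apply MonotoneOn.convexOn_of_deriv (convex_Icc _ _)
    · have hscont : Continuous (fun u : ℝ => Real.sqrt (-(σ * β * u))) :=
        Real.continuous_sqrt.comp (by continuity)
      have htcont : Continuous (fun u : ℝ => Real.sqrt ((a - σ) ^ 2 - 4 * σ * δ * u)) :=
        Real.continuous_sqrt.comp (by continuity)
      exact (hscont.neg.sub ((continuous_const.mul hscont).mul htcont)).continuousOn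
    · rw [interior_Icc]
      exact fun u hu => (aux_deriv a σ β δ hσ haσ hβ hδ hu).differentiableAt.differentiableWithinAt
    · rw [interior_Icc]
      intro x hx y hy hxy
      rw [(aux_deriv a σ β δ hσ haσ hβ hδ hx).deriv, (aux_deriv a σ β δ hσ haσ hβ hδ hy).deriv]
      exact aux_mono a σ β δ hσ haσ hβ hδ hx hy hxy
  · apply Set.eq_univ_iff_forall.mpr
    intro y
    have hevT : ∀ᶠ u in nhdsWithin ((a - σ) ^ 2 / (4 * σ * δ))
        (Set.Iio ((a - σ) ^ 2 / (4 * σ * δ))), y ≤ σ * β / (2 * Real.sqrt (-(σ * β * u))) +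
        β * Real.sqrt ((a - σ) ^ 2 - 4 * σ * δ * u) / (2 * Real.sqrt (-(σ * β * u))) +
        2 * δ * Real.sqrt (-(σ * β * u)) / Real.sqrt ((a - σ) ^ 2 - 4 * σ * δ * u) :=
      (aux_tendstoT a σ β δ hσ haσ hβ hδ).eventually_ge_atTop y
    have hposT : ∀ᶠ u in nhdsWithin ((a - σ) ^ 2 / (4 * σ * δ))
        (Set.Iio ((a - σ) ^ 2 / (4 * σ * δ))), 0 < u :=
      ((eventually_gt_nhds hT0).filter_mono nhdsWithin_le_nhds)
    have hmemT : ∀ᶠ u in nhdsWithin ((a - σ) ^ 2 / (4 * σ * δ))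
        (Set.Iio ((a - σ) ^ 2 / (4 * σ * δ))), u < (a - σ) ^ 2 / (4 * σ * δ) :=
      eventually_mem_nhdsWithin
    obtain ⟨u2, hy2, hu2pos, hu2T⟩ := (hevT.and (hposT.and hmemT)).exists
    have hev0 : ∀ᶠ u in nhdsWithin (0:ℝ) (Set.Ioi 0),
        σ * β / (2 * Real.sqrt (-(σ * β * u))) +
        β * Real.sqrt ((a - σ) ^ 2 - 4 * σ * δ * u) / (2 * Real.sqrt (-(σ * β * u))) +
        2 * δ * Real.sqrt (-(σ * β * u)) / Real.sqrt ((a - σ) ^ 2 - 4 * σ * δ * u) ≤ y :=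
      (aux_tendsto0 a σ β δ hσ haσ hβ hδ).eventually_le_atBot y
    have hlt0 : ∀ᶠ u in nhdsWithin (0:ℝ) (Set.Ioi 0), u < u2 :=
      ((eventually_lt_nhds hu2pos).filter_mono nhdsWithin_le_nhds)
    have hmem0 : ∀ᶠ u in nhdsWithin (0:ℝ) (Set.Ioi 0), 0 < u := eventually_mem_nhdsWithin
    obtain ⟨u1, hy1, hu1u2, hu1pos⟩ := (hev0.and (hlt0.and hmem0)).exists
    have hsub : Set.Icc u1 u2 ⊆ Set.Ioo (0:ℝ) ((a - σ) ^ 2 / (4 * σ * δ)) :=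
      fun v hv => ⟨lt_of_lt_of_le hu1pos hv.1, lt_of_le_of_lt hv.2 hu2T⟩
    have hivt := intermediate_value_Icc hu1u2.le
      ((aux_cont a σ β δ hσ haσ hβ hδ).mono hsub)
    obtain ⟨v, hv, hgv⟩ := hivt ⟨hy1, hy2⟩
    exact ⟨v, hsub hv, hgv⟩
end
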